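/- arXiv:2506.21740 — 3 statements merged into one kernel-verified Lean document; each statement's English description precedes it below -/
import Mathlib

section
/- Let v be any price schedule with payoff u, and let i_0 < i_1 < i_2 < ⋯ be the indices i with μ(X_i) > 0. Then for every k: (1) the closure of X_{i_k} intersects ([0,1]×{0}) ∪ ({1}×[0,1]); and (2) the closure of X_{i_{k+1}} intersected with the closure of X_{i_k} intersected with ([0,1]×{0}) ∪ ({1}×[0,1]) is nonempty. -/
open MeasureTheory Set Filter
open scoped ENNReal

noncomputable section

/-- Dot product on `ℝ × ℝ`. -/
def dot (a b : ℝ × ℝ) : ℝ := a.1 * b.1 + a.2 * b.2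

/-- The square of consumer types `X = (0,1)²`. -/
def Xsq : Set (ℝ × ℝ) := Ioo (0:ℝ) 1 ×ˢ Ioo (0:ℝ) 1

/-- The point `z_i = (y_i, F(y_i))` on the curve of goods. -/
def zpt (y : ℕ → ℝ) (F : ℝ → ℝ) (i : ℕ) : ℝ × ℝ := (y i, F (y i))

/-- The region of consumers strictly preferring good `i` under prices `v`. -/
def region (N : ℕ) (y : ℕ → ℝ) (F : ℝ → ℝ) (v : ℕ → ℝ) (i : ℕ) : Set (ℝ × ℝ) :=
  {x ∈ Xsq | ∀ j ≤ N, j ≠ i → dot x (zpt y F j) - v j < dot x (zpt y F i) - v i}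

/-- Payoff (indirect utility) of a price schedule `v`. -/
def payoff (N : ℕ) (y : ℕ → ℝ) (F : ℝ → ℝ) (v : ℕ → ℝ) (x : ℝ × ℝ) : ℝ :=
  Finset.sup' (Finset.range (N + 1)) (by simp) (fun i => dot x (zpt y F i) - v i)

/-- The monopolist's profit from price schedule `v`. -/
def profit (μ : Measure (ℝ × ℝ)) (N : ℕ) (y : ℕ → ℝ) (F : ℝ → ℝ) (c : ℝ × ℝ → ℝ)
    (v : ℕ → ℝ) : ℝ :=
  ∑ i ∈ Finset.range (N + 1), (v i - c (zpt y F i)) * (μ (region N y F v i)).toReal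

/-- Optimality of a price schedule for the semi-discrete monopolist's problem. -/
def IsOptimal (μ : Measure (ℝ × ℝ)) (N : ℕ) (y : ℕ → ℝ) (F : ℝ → ℝ) (c : ℝ × ℝ → ℝ)
    (v : ℕ → ℝ) : Prop :=
  v 0 = 0 ∧ ∀ v' : ℕ → ℝ, v' 0 = 0 → profit μ N y F c v' ≤ profit μ N y F c v

/-- Discrete sublevel set `X_≤^N(y_i, k)`. -/
def Xle (y : ℕ → ℝ) (F : ℝ → ℝ) (i : ℕ) (k : ℝ) : Set (ℝ × ℝ) :=
  {x ∈ Xsq | dot x (zpt y F (i+1) - zpt y F i) ≤ k}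

/-- Discrete strict sublevel set `X_<^N(y_i, k)`. -/
def Xlt (y : ℕ → ℝ) (F : ℝ → ℝ) (i : ℕ) (k : ℝ) : Set (ℝ × ℝ) :=
  {x ∈ Xsq | dot x (zpt y F (i+1) - zpt y F i) < k}

/-- Discrete level set `X_=^N(y_i, k)`. -/
def Xeq (y : ℕ → ℝ) (F : ℝ → ℝ) (i : ℕ) (k : ℝ) : Set (ℝ × ℝ) :=
  {x ∈ Xsq | dot x (zpt y F (i+1) - zpt y F i) = k}

/-- Hypothesis (H1): `c` is more convex than `F` along the grid. -/
def H1 (N : ℕ) (y : ℕ → ℝ) (F : ℝ → ℝ) (c : ℝ × ℝ → ℝ) : Prop :=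
  ∀ k i j : ℕ, k < i → i < j → j ≤ N →
    (c (zpt y F i) - c (zpt y F k)) / (F (y i) - F (y k)) <
      (c (zpt y F j) - c (zpt y F i)) / (F (y j) - F (y i))

/-- Hypothesis (H2). -/
def H2 (N : ℕ) (y : ℕ → ℝ) (F : ℝ → ℝ) (c : ℝ × ℝ → ℝ) (α fsup f1sup : ℝ) : Prop :=
  ∀ i : ℕ, 0 < i → i < N →
    ((3/2) * fsup + (f1sup / 2) *
        (1 + (F (y (i+1)) - F (y i)) / (y (i+1) - y i)
           + (c (zpt y F (i+1)) - c (zpt y F i)) / (y (i+1) - y i))) / α <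
      ((c (zpt y F (i+1)) - c (zpt y F i)) / (y (i+1) - y i)
          - (c (zpt y F i) - c (zpt y F (i-1))) / (y i - y (i-1))) /
        ((F (y (i+1)) - F (y i)) / (y (i+1) - y i)
          - (F (y i) - F (y (i-1))) / (y i - y (i-1)))

/-- Hypothesis (H3). -/
def H3 (N : ℕ) (y : ℕ → ℝ) (F : ℝ → ℝ) (c : ℝ × ℝ → ℝ) (α fsup f2sup : ℝ) : Prop :=
  ∀ i : ℕ, 0 < i → i < N →
    (F (y (i+1)) - F (y i)) / (y (i+1) - y i) <
      2 * α / (fsup * (2 + ((F (y (i+1)) - F (y i)) / (y (i+1) - y i)) /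
            ((F (y i) - F (y (i-1))) / (y i - y (i-1))))
          + f2sup * (1 + 2 * (y i - y (i-1)) / (F (y i) - F (y (i-1)))
            + (c (zpt y F (i+1)) - c (zpt y F i)) / (F (y (i+1)) - F (y i))))
        * (1 + ((c (zpt y F (i+1)) - c (zpt y F i)) / (F (y (i+1)) - F (y i))
              - (c (zpt y F i) - c (zpt y F (i-1))) / (F (y i) - F (y (i-1)))) /
            ((y i - y (i-1)) / (F (y i) - F (y (i-1)))
              - (y (i+1) - y i) / (F (y (i+1)) - F (y i))))

/-- The bottom and right-hand part of the boundary of the square: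
`([0,1]×{0}) ∪ ({1}×[0,1])`. -/
def botRight : Set (ℝ × ℝ) :=
  (Icc (0:ℝ) 1 ×ˢ ({0} : Set ℝ)) ∪ (({1} : Set ℝ) ×ˢ Icc (0:ℝ) 1)

/-!
Move a consumer of good `i` in the direction `(s, -1)`, where `s` is the slope of the left secant
of `F` at `y i`: by convexity of `F` this never lowers the advantage of good `i` over any other
good, and the ray leaves the square through the bottom or the right edge. A point of the closed
square where `i` is weakly best lies in the closure of `X_i`, since the open segment joining it to
a point of `X_i` stays in `X_i`. Along the bottom-right edge, parametrised monotonically from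
`(0, 0)` to `(1, 1)`, the utility difference of two goods is strictly increasing, so the best
good can only increase and two goods tie at most once. Hence between the exit points of `i` and
of `j` either `i` and `j` are simultaneously best, or on a whole interval only goods strictly
between them are best, and off the finitely many ties one of them is the unique best good; it
is then bought on a nonempty open subset of the square, which has positive measure.
-/

lemma isMaxOn_of_strictMax {ι β : Type*} [Preorder β] {f : ι → β} {s : Set ι} {k : ι}
    (hmax : ∀ l ∈ s, l ≠ k → f l < f k) : IsMaxOn f s k :=
  isMaxOn_iff.2 fun l hl => (eq_or_ne l k).elim (fun h => h ▸ le_rfl) fun h => (hmax l hl h).le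

lemma measure_withDensity_pos_of_isOpen {X : Type*} [TopologicalSpace X] [MeasurableSpace X]
    [OpensMeasurableSpace X] {ν : Measure X} [ν.IsOpenPosMeasure] {f : X → ℝ} {α : ℝ}
    {s S : Set X} (hα : 0 < α) (hf : ∀ x ∈ s, α ≤ f x) (hS : IsOpen S) (hSs : S ⊆ s)
    (hne : S.Nonempty) : 0 < (ν.restrict s).withDensity (fun x => ENNReal.ofReal (f x)) S := by
  rw [withDensity_apply _ hS.measurableSet, Measure.restrict_restrict hS.measurableSet,
    inter_eq_self_of_subset_left hSs]
  calc (0 : ℝ≥0∞) < ENNReal.ofReal α * ν S :=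
        ENNReal.mul_pos (ENNReal.ofReal_pos.2 hα).ne' (hS.measure_pos ν hne).ne'
    _ = ∫⁻ _ in S, ENNReal.ofReal α ∂ν := (setLIntegral_const S _).symm
    _ ≤ ∫⁻ x in S, ENNReal.ofReal (f x) ∂ν :=
        setLIntegral_mono' hS.measurableSet fun x hx => ENNReal.ofReal_le_ofReal (hf x (hSs hx))

lemma ConvexOn.slope_mul_sub_le_of_notMem_Ioo {D : Set ℝ} {F : ℝ → ℝ} (hF : ConvexOn ℝ D F)
    {a b q : ℝ} (ha : a ∈ D) (hb : b ∈ D) (hq : q ∈ D) (hab : a < b) (hqab : q ∉ Ioo a b) :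
    (F b - F a) / (b - a) * (q - b) ≤ F q - F b := by
  have hslope : (F b - F a) / (b - a) = (F a - F b) / (a - b) := by
    rw [← neg_div_neg_eq, neg_sub, neg_sub]
  rcases lt_trichotomy q b with hqb | rfl | hqb
  · have hqa : q ≤ a := le_of_not_gt fun h => hqab ⟨h, hqb⟩
    have := hF.secant_mono hb hq ha hqb.ne (by linarith) hqa
    rw [← hslope, div_le_iff_of_neg (by linarith)] at this
    linarith
  · simp
  · have := hF.secant_mono hb ha hq (by linarith) hqb.ne' (by linarith)
    rw [← hslope, le_div_iff₀ (by linarith)] at this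
    exact this

def botRightPath (t : ℝ) : ℝ × ℝ := (min t 1, max (t - 1) 0)

def utility (z : ℕ → ℝ × ℝ) (v : ℕ → ℝ) (k : ℕ) (x : ℝ × ℝ) : ℝ := dot x (z k) - v k

lemma dot_add_smul (x d w : ℝ × ℝ) (c : ℝ) : dot (x + c • d) w = dot x w + c * dot d w := by
  simp only [dot, Prod.fst_add, Prod.snd_add, Prod.smul_fst, Prod.smul_snd, smul_eq_mul]
  ring

lemma dot_smul_add_smul (a b w : ℝ × ℝ) (p q : ℝ) :
    dot (p • a + q • b) w = p * dot a w + q * dot b w := by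
  simp only [dot, Prod.fst_add, Prod.snd_add, Prod.smul_fst, Prod.smul_snd, smul_eq_mul]
  ring

lemma continuous_dot_left (w : ℝ × ℝ) : Continuous fun x => dot x w := by
  unfold dot; fun_prop

lemma isOpen_Xsq : IsOpen Xsq := isOpen_Ioo.prod isOpen_Ioo

lemma convex_Xsq : Convex ℝ Xsq := (convex_Ioo 0 1).prod (convex_Ioo 0 1)

lemma closure_Xsq : closure Xsq = Icc (0:ℝ) 1 ×ˢ Icc (0:ℝ) 1 := by
  rw [Xsq, closure_prod_eq, closure_Ioo zero_ne_one]

lemma botRight_subset_closure_Xsq : botRight ⊆ closure Xsq := by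
  rw [closure_Xsq, botRight]
  rintro x (⟨hx1, hx2⟩ | ⟨hx1, hx2⟩)
  · exact ⟨hx1, by simp_all⟩
  · exact ⟨by simp_all, hx2⟩

lemma botRightPath_of_le_one {t : ℝ} (ht : t ≤ 1) : botRightPath t = (t, 0) := by
  simp [botRightPath, ht]

lemma botRightPath_of_one_le {t : ℝ} (ht : 1 ≤ t) : botRightPath t = (1, t - 1) := by
  simp [botRightPath, ht]

lemma botRightPath_mem_botRight {t : ℝ} (ht : t ∈ Icc (0:ℝ) 2) : botRightPath t ∈ botRight := by
  rcases le_total t 1 with h | h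
  · rw [botRightPath_of_le_one h]
    exact Or.inl ⟨⟨ht.1, h⟩, rfl⟩
  · rw [botRightPath_of_one_le h]
    exact Or.inr ⟨rfl, by constructor <;> linarith [ht.2]⟩

lemma continuous_botRightPath : Continuous botRightPath := by
  unfold botRightPath; fun_prop

lemma botRightPath_fst_add_snd (t : ℝ) : (botRightPath t).1 + (botRightPath t).2 = t := by
  rcases le_total t 1 with h | h
  · simp [botRightPath_of_le_one h]
  · simp [botRightPath_of_one_le h]

lemma monotone_botRightPath_fst : Monotone fun t => (botRightPath t).1 :=
  fun _ _ h => min_le_min h le_rfl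

lemma monotone_botRightPath_snd : Monotone fun t => (botRightPath t).2 :=
  fun _ _ h => max_le_max (by linarith) le_rfl

lemma strictMono_dot_botRightPath {w : ℝ × ℝ} (hw1 : 0 < w.1) (hw2 : 0 < w.2) :
    StrictMono fun t => dot (botRightPath t) w := by
  intro t t' htt'
  have h1 := monotone_botRightPath_fst htt'.le
  have h2 := monotone_botRightPath_snd htt'.le
  have hsum := botRightPath_fst_add_snd t
  have hsum' := botRightPath_fst_add_snd t'
  simp only [dot] at h1 h2 ⊢
  rcases h1.lt_or_eq with h1 | h1 <;> nlinarith

lemma exists_botRightPath_eq_add_smul {a : ℝ × ℝ} (ha : a ∈ Xsq) {s : ℝ} (hs : 0 ≤ s) :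
    ∃ t ∈ Icc (0:ℝ) 2, ∃ c : ℝ, 0 ≤ c ∧ botRightPath t = a + c • (s, -1) := by
  obtain ⟨⟨ha1, ha1'⟩, ha2, ha2'⟩ := ha
  by_cases hbot : s * a.2 ≤ 1 - a.1
  · refine ⟨a.1 + s * a.2, ⟨by positivity, by linarith⟩, a.2, ha2.le, ?_⟩
    rw [botRightPath_of_le_one (by linarith)]
    ext <;> simp [mul_comm]
  · have hs' : 0 < s := hs.lt_of_ne fun h => hbot (by rw [← h]; linarith)
    have hc : (1 - a.1) / s < a.2 := by rw [div_lt_iff₀ hs']; linarith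
    have hc0 : 0 ≤ (1 - a.1) / s := div_nonneg (by linarith) hs
    refine ⟨1 + a.2 - (1 - a.1) / s, ⟨by linarith, by linarith⟩, (1 - a.1) / s, hc0, ?_⟩
    rw [botRightPath_of_one_le (by linarith)]
    ext <;> simp [div_mul_cancel₀ _ hs'.ne']
    ring

section IncreasingDifferences

variable {N : ℕ} {U : ℕ → ℝ → ℝ}

lemma le_of_isMaxOn_of_lt (hU : ∀ k l, k < l → l ≤ N → StrictMono fun t => U l t - U k t)
    {k l : ℕ} {t t' : ℝ} (hk : k ≤ N) (hl : l ≤ N) (hkt : IsMaxOn (U · t) (Iic N) k)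
    (hlt : IsMaxOn (U · t') (Iic N) l) (htt' : t < t') : k ≤ l := by
  by_contra! hlk
  have := hU l k hlk hk htt'
  have := isMaxOn_iff.1 hkt l hl
  have := isMaxOn_iff.1 hlt k hk
  linarith

lemma finite_setOf_tie (hU : ∀ k l, k < l → l ≤ N → StrictMono fun t => U l t - U k t) :
    {t | ∃ k ≤ N, ∃ l ≤ N, k ≠ l ∧ U k t = U l t}.Finite := by
  refine ((finite_Iic N).biUnion fun k _ => (finite_Iic N).biUnion fun l hl =>
    Set.Subsingleton.finite (s := {t | k < l ∧ U k t = U l t}) ?_).subset ?_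
  · rintro t ⟨hkl, ht⟩ t' ⟨-, ht'⟩
    exact (hU k l hkl hl).injective (by linarith)
  · rintro t ⟨k, hk, l, hl, hkl, ht⟩
    simp only [mem_iUnion, mem_Iic, mem_ofPred_eq, exists_prop]
    rcases hkl.lt_or_gt with h | h
    · exact ⟨k, hk, l, hl, h, ht⟩
    · exact ⟨l, hl, k, hk, h, ht.symm⟩

lemma exists_strictMax_of_lt (hU : ∀ k l, k < l → l ≤ N → StrictMono fun t => U l t - U k t)
    {a b : ℝ} (hab : a < b) : ∃ t ∈ Ioo a b, ∃ k ≤ N, ∀ l ≤ N, l ≠ k → U l t < U k t := by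
  obtain ⟨t, hab, hnotie⟩ := ((Ioo_infinite hab).sdiff (finite_setOf_tie hU)).nonempty
  obtain ⟨k, hk, hmax⟩ := exists_max_image (Iic N) (U · t) (finite_Iic N) ⟨0, Nat.zero_le N⟩
  exact ⟨t, hab, k, hk, fun l hl hlk =>
    (hmax l hl).lt_of_ne fun h => hnotie ⟨l, hl, k, hk, hlk, h⟩⟩

lemma isClosed_setOf_isMaxOn (hU : ∀ k, Continuous (U k)) (k : ℕ) :
    IsClosed {t | IsMaxOn (U · t) (Iic N) k} := by
  simp only [isMaxOn_iff, ofPred_forall]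
  exact isClosed_biInter fun l _ => isClosed_le (hU l) (hU k)

lemma exists_isMaxOn_isMaxOn (hU : ∀ k, Continuous (U k))
    (hinc : ∀ k l, k < l → l ≤ N → StrictMono fun t => U l t - U k t)
    {i j : ℕ} {ti tj : ℝ} (hij : i < j) (hj : j ≤ N)
    (hti : IsMaxOn (U · ti) (Iic N) i) (htj : IsMaxOn (U · tj) (Iic N) j)
    (hgap : ∀ t ∈ Icc ti tj, ∀ k, i < k → k < j → ¬ ∀ l ≤ N, l ≠ k → U l t < U k t) :
    ∃ t ∈ Icc ti tj, IsMaxOn (U · t) (Iic N) i ∧ IsMaxOn (U · t) (Iic N) j := by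
  have hi : i ≤ N := hij.le.trans hj
  have htij : ti ≤ tj := le_of_not_gt fun h =>
    (le_of_isMaxOn_of_lt hinc hj hi htj hti h).not_gt hij
  set A := Icc ti tj ∩ {t | IsMaxOn (U · t) (Iic N) i}
  have hAbdd : BddAbove A := ⟨tj, fun t ht => ht.1.2⟩
  have hτ : sSup A ∈ A := (isClosed_Icc.inter (isClosed_setOf_isMaxOn hU i)).csSup_mem
    ⟨ti, ⟨le_rfl, htij⟩, hti⟩ hAbdd
  set B := Icc (sSup A) tj ∩ {t | IsMaxOn (U · t) (Iic N) j}
  have hBbdd : BddBelow B := ⟨sSup A, fun t ht => ht.1.1⟩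
  have hσ : sInf B ∈ B := (isClosed_Icc.inter (isClosed_setOf_isMaxOn hU j)).csInf_mem
    ⟨tj, ⟨hτ.1.2, le_rfl⟩, htj⟩ hBbdd
  rcases hσ.1.1.eq_or_lt with hτσ | hτσ
  · exact ⟨sSup A, hτ.1, hτ.2, hτσ ▸ hσ.2⟩
  obtain ⟨t, ht, k, hk, hmax⟩ := exists_strictMax_of_lt hinc hτσ
  have htmem : t ∈ Icc ti tj := ⟨hτ.1.1.trans ht.1.le, ht.2.le.trans hσ.1.2⟩
  have hkt := isMaxOn_of_strictMax hmax
  have hik : i < k := (le_of_isMaxOn_of_lt hinc hi hk hτ.2 hkt ht.1).lt_of_ne fun h =>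
    ht.1.not_ge (le_csSup hAbdd ⟨htmem, h ▸ hkt⟩)
  have hkj : k < j := (le_of_isMaxOn_of_lt hinc hk hj hkt hσ.2 ht.2).lt_of_ne fun h =>
    ht.2.not_ge (csInf_le hBbdd ⟨⟨ht.1.le, htmem.2⟩, h ▸ hkt⟩)
  exact (hgap t htmem k hik hkj hmax).elim

end IncreasingDifferences

section Regions

variable {N : ℕ} {y : ℕ → ℝ} {F : ℝ → ℝ} {v : ℕ → ℝ}

lemma continuous_utility (z : ℕ → ℝ × ℝ) (v : ℕ → ℝ) (k : ℕ) : Continuous (utility z v k) :=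
  (continuous_dot_left _).sub continuous_const

lemma isOpen_setOf_strictMax (z : ℕ → ℝ × ℝ) (v : ℕ → ℝ) (N k : ℕ) :
    IsOpen {x | ∀ l ≤ N, l ≠ k → utility z v l x < utility z v k x} := by
  have : {x | ∀ l ≤ N, l ≠ k → utility z v l x < utility z v k x} =
      ⋂ l ∈ Iic N \ {k}, {x | utility z v l x < utility z v k x} := by
    ext x; simp
  rw [this]
  exact (finite_Iic N).sdiff.isOpen_biInter fun l _ =>
    isOpen_lt (continuous_utility z v l) (continuous_utility z v k)

lemma region_eq (N : ℕ) (y : ℕ → ℝ) (F : ℝ → ℝ) (v : ℕ → ℝ) (i : ℕ) :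
    region N y F v i =
      Xsq ∩ {x | ∀ l ≤ N, l ≠ i → utility (zpt y F) v l x < utility (zpt y F) v i x} :=
  rfl

lemma isOpen_region (N : ℕ) (y : ℕ → ℝ) (F : ℝ → ℝ) (v : ℕ → ℝ) (i : ℕ) :
    IsOpen (region N y F v i) :=
  region_eq N y F v i ▸ isOpen_Xsq.inter (isOpen_setOf_strictMax _ v N i)

lemma region_nonempty_of_strictMax {k : ℕ} {w : ℝ × ℝ} (hw : w ∈ closure Xsq)
    (hmax : ∀ l ≤ N, l ≠ k → utility (zpt y F) v l w < utility (zpt y F) v k w) :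
    (region N y F v k).Nonempty := by
  have := (isOpen_setOf_strictMax (zpt y F) v N k).inter_closure ⟨hmax, hw⟩
  rw [region_eq, inter_comm, ← closure_nonempty_iff]
  exact ⟨w, this⟩

lemma mem_closure_region_of_isMaxOn {i : ℕ} {a w : ℝ × ℝ} (ha : a ∈ region N y F v i)
    (hw : w ∈ closure Xsq) (hmax : IsMaxOn (utility (zpt y F) v · w) (Iic N) i) :
    w ∈ closure (region N y F v i) := by
  suffices openSegment ℝ a w ⊆ region N y F v i from
    closure_mono this (segment_subset_closure_openSegment (right_mem_segment ℝ a w))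
  rintro x ⟨p, q, hp, hq, hpq, rfl⟩
  refine ⟨isOpen_Xsq.interior_eq ▸ convex_Xsq.openSegment_interior_closure_subset_interior
    (isOpen_Xsq.interior_eq.symm ▸ ha.1) hw ⟨p, q, hp, hq, hpq, rfl⟩, fun l hl hli => ?_⟩
  have hlt := mul_lt_mul_of_pos_left (ha.2 l hl hli) hp
  have hle := mul_le_mul_of_nonneg_left (isMaxOn_iff.1 hmax l hl) hq.le
  simp only [utility] at hlt hle ⊢
  rw [dot_smul_add_smul, dot_smul_add_smul]
  have hv : ∀ m, v m = p * v m + q * v m := fun m => by rw [← add_mul, hpq, one_mul]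
  rw [hv l, hv i]
  linarith

lemma not_strictMax_of_measure_region_eq_zero {f : ℝ × ℝ → ℝ} {α : ℝ} (hα : 0 < α)
    (hf : ∀ x ∈ Xsq, α ≤ f x) {k : ℕ} {w : ℝ × ℝ} (hw : w ∈ closure Xsq)
    (h0 : (volume.restrict Xsq).withDensity (fun x => ENNReal.ofReal (f x))
      (region N y F v k) = 0) :
    ¬ ∀ l ≤ N, l ≠ k → utility (zpt y F) v l w < utility (zpt y F) v k w := fun hmax =>
  (measure_withDensity_pos_of_isOpen hα hf (isOpen_region N y F v k) (fun _ hx => hx.1)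
    (region_nonempty_of_strictMax hw hmax)).ne' h0

end Regions

/-- The left secant slope at `y i` supports the points of the grid. -/
lemma exists_supporting_slope {N : ℕ} {y : ℕ → ℝ} {F : ℝ → ℝ} {D : Set ℝ}
    (hy : StrictMonoOn y (Iic N)) (hyD : ∀ k ≤ N, y k ∈ D) (hFmono : MonotoneOn F D)
    (hFconv : ConvexOn ℝ D F) {i : ℕ} (hi : i ≤ N) :
    ∃ s, 0 ≤ s ∧ ∀ l ≤ N, s * y l - F (y l) ≤ s * y i - F (y i) := by
  rcases i with _ | i
  · refine ⟨0, le_rfl, fun l hl => ?_⟩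
    have := hFmono (hyD 0 (Nat.zero_le N)) (hyD l hl)
      (hy.monotoneOn (Nat.zero_le N) hl (Nat.zero_le l))
    linarith
  have hi' : i ≤ N := by omega
  have hyi : y i < y (i + 1) := hy hi' hi (Nat.lt_succ_self i)
  refine ⟨(F (y (i + 1)) - F (y i)) / (y (i + 1) - y i),
    div_nonneg (sub_nonneg.2 (hFmono (hyD i hi') (hyD _ hi) hyi.le)) (by linarith),
    fun l hl => ?_⟩
  have hlI : y l ∉ Ioo (y i) (y (i + 1)) := by
    rintro ⟨h1, h2⟩
    have := (hy.lt_iff_lt hi' hl).1 h1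
    have := (hy.lt_iff_lt hl hi).1 h2
    omega
  have := hFconv.slope_mul_sub_le_of_notMem_Ioo (hyD i hi') (hyD _ hi) (hyD l hl) hyi hlI
  linarith

lemma mem_Icc_of_monotoneOn_Iic {N : ℕ} {y : ℕ → ℝ} {b : ℝ} (hy : MonotoneOn y (Iic N))
    (hy0 : y 0 = 0) (hyN : y N ≤ b) {k : ℕ} (hk : k ≤ N) : y k ∈ Icc 0 b :=
  ⟨hy0 ▸ hy (Nat.zero_le N) hk (Nat.zero_le k), (hy hk (le_refl N) hk).trans hyN⟩

lemma isMaxOn_utility_add_smul {z : ℕ → ℝ × ℝ} {v : ℕ → ℝ} {N i : ℕ} {x d : ℝ × ℝ} {c : ℝ}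
    (hx : IsMaxOn (utility z v · x) (Iic N) i) (hd : ∀ l ≤ N, dot d (z l) ≤ dot d (z i))
    (hc : 0 ≤ c) : IsMaxOn (utility z v · (x + c • d)) (Iic N) i := by
  refine isMaxOn_iff.2 fun l hl => ?_
  have := isMaxOn_iff.1 hx l hl
  have := mul_le_mul_of_nonneg_left (hd l hl) hc
  simp only [utility, dot_add_smul] at *
  linarith

lemma exists_botRightPath_isMaxOn {N : ℕ} {y : ℕ → ℝ} {F : ℝ → ℝ} {v : ℕ → ℝ} {D : Set ℝ}
    (hy : StrictMonoOn y (Iic N)) (hyD : ∀ k ≤ N, y k ∈ D) (hFmono : MonotoneOn F D)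
    (hFconv : ConvexOn ℝ D F) {i : ℕ} (hi : i ≤ N) {a : ℝ × ℝ} (ha : a ∈ region N y F v i) :
    ∃ t ∈ Icc (0:ℝ) 2, IsMaxOn (utility (zpt y F) v · (botRightPath t)) (Iic N) i := by
  obtain ⟨s, hs, hsupp⟩ := exists_supporting_slope hy hyD hFmono hFconv hi
  obtain ⟨t, ht, c, hc, hpath⟩ := exists_botRightPath_eq_add_smul ha.1 hs
  refine ⟨t, ht, hpath ▸ isMaxOn_utility_add_smul (isMaxOn_of_strictMax ha.2) (fun l hl => ?_) hc⟩
  simpa [dot, zpt, sub_eq_add_neg] using hsupp l hl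

lemma zpt_lt_zpt {N : ℕ} {y : ℕ → ℝ} {F : ℝ → ℝ} {D : Set ℝ} (hy : StrictMonoOn y (Iic N))
    (hyD : ∀ k ≤ N, y k ∈ D) (hF : StrictMonoOn F D) {k l : ℕ} (hkl : k < l) (hl : l ≤ N) :
    (zpt y F k).1 < (zpt y F l).1 ∧ (zpt y F k).2 < (zpt y F l).2 :=
  have hy' := hy (hkl.le.trans hl) hl hkl
  ⟨hy', hF (hyD k (hkl.le.trans hl)) (hyD l hl) hy'⟩

lemma strictMono_utility_sub_utility_botRightPath (z : ℕ → ℝ × ℝ) (v : ℕ → ℝ) {k l : ℕ}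
    (h1 : (z k).1 < (z l).1) (h2 : (z k).2 < (z l).2) :
    StrictMono fun t => utility z v l (botRightPath t) - utility z v k (botRightPath t) := by
  intro t t' htt'
  have := strictMono_dot_botRightPath (w := z l - z k) (sub_pos.2 h1) (sub_pos.2 h2) htt'
  simp only [utility, dot, Prod.fst_sub, Prod.snd_sub] at this ⊢
  linarith

theorem regions_meet_bottom_right_boundary_general
    (ty α : ℝ) (F : ℝ → ℝ)
    (N : ℕ) (y : ℕ → ℝ) (f : ℝ × ℝ → ℝ) (μ : Measure (ℝ × ℝ))
    (hα : 0 < α)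
    (hFmono : StrictMonoOn F (Icc 0 ty)) (hFconv : ConvexOn ℝ (Icc 0 ty) F)
    (hy0 : y 0 = 0) (hyinc : ∀ i < N, y i < y (i+1)) (hyN : y N ≤ ty)
    (hμ : μ = (volume.restrict Xsq).withDensity fun x => ENNReal.ofReal (f x))
    (hfl : ∀ x ∈ Xsq, α ≤ f x)
    (v : ℕ → ℝ) :
    (∀ i ≤ N, 0 < μ (region N y F v i) →
      (closure (region N y F v i) ∩ botRight).Nonempty) ∧
    (∀ i j : ℕ, i < j → j ≤ N →
      0 < μ (region N y F v i) → 0 < μ (region N y F v j) →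
      (∀ p : ℕ, i < p → p < j → μ (region N y F v p) = 0) →
      (closure (region N y F v j) ∩ closure (region N y F v i) ∩ botRight).Nonempty) := by
  subst hμ
  have hy : StrictMonoOn y (Iic N) := strictMonoOn_Iic_of_lt_succ hyinc
  have hyD : ∀ k ≤ N, y k ∈ Icc 0 ty := fun k => mem_Icc_of_monotoneOn_Iic hy.monotoneOn hy0 hyN
  have hexit := fun i hi a (ha : a ∈ region N y F v i) =>
    exists_botRightPath_isMaxOn hy hyD hFmono.monotoneOn hFconv hi ha
  have hpath : ∀ {t : ℝ}, t ∈ Icc (0:ℝ) 2 → botRightPath t ∈ closure Xsq :=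
    fun ht => botRight_subset_closure_Xsq (botRightPath_mem_botRight ht)
  refine ⟨fun i hi hpos => ?_, fun i j hij hj hpi hpj hgap => ?_⟩
  · obtain ⟨a, ha⟩ := nonempty_of_measure_ne_zero hpos.ne'
    obtain ⟨t, ht, hmax⟩ := hexit i hi a ha
    exact ⟨_, mem_closure_region_of_isMaxOn ha (hpath ht) hmax, botRightPath_mem_botRight ht⟩
  obtain ⟨a, ha⟩ := nonempty_of_measure_ne_zero hpi.ne'
  obtain ⟨b, hb⟩ := nonempty_of_measure_ne_zero hpj.ne'
  obtain ⟨ti, hti, hmaxi⟩ := hexit i (hij.le.trans hj) a ha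
  obtain ⟨tj, htj, hmaxj⟩ := hexit j hj b hb
  have hsub : Icc ti tj ⊆ Icc 0 2 := Icc_subset_Icc hti.1 htj.2
  obtain ⟨t, ht, hi', hj'⟩ := exists_isMaxOn_isMaxOn
    (fun k => (continuous_utility _ v k).comp continuous_botRightPath)
    (fun k l hkl hl =>
      (zpt_lt_zpt hy hyD hFmono hkl hl).elim (strictMono_utility_sub_utility_botRightPath _ v))
    hij hj hmaxi hmaxj fun t ht k hik hkj =>
      not_strictMax_of_measure_region_eq_zero hα hfl (hpath (hsub ht)) (hgap k hik hkj)
  exact ⟨_, ⟨mem_closure_region_of_isMaxOn hb (hpath (hsub ht)) hj',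
    mem_closure_region_of_isMaxOn ha (hpath (hsub ht)) hi'⟩, botRightPath_mem_botRight (hsub ht)⟩

/-- Lemma `partition`: every purchased good is purchased by consumers
reaching the bottom-right part of the boundary, and consecutive (in the enumeration of goods
with positive mass) regions share such a boundary point. -/
theorem regions_meet_bottom_right_boundary
    (ty α fsup f1sup f2sup : ℝ) (F : ℝ → ℝ) (c : ℝ × ℝ → ℝ)
    (N : ℕ) (y : ℕ → ℝ) (f : ℝ × ℝ → ℝ) (μ : Measure (ℝ × ℝ))
    (hty : 0 < ty) (hα : 0 < α)
    (hF0 : F 0 = 0) (hFmono : StrictMonoOn F (Icc 0 ty)) (hFconv : ConvexOn ℝ (Icc 0 ty) F)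
    (hy0 : y 0 = 0) (hyinc : ∀ i < N, y i < y (i+1)) (hyN : y N ≤ ty)
    (hc0 : c (0, 0) = 0)
    (hcmono : StrictMonoOn (fun s => c (s, F s)) (Icc 0 ty))
    (hcconv : ConvexOn ℝ (Icc 0 ty) (fun s => c (s, F s)))
    (hμ : μ = (volume.restrict Xsq).withDensity fun x => ENNReal.ofReal (f x))
    (hprob : IsProbabilityMeasure μ)
    (hfl : ∀ x ∈ Xsq, α ≤ f x) (hfu : ∀ x ∈ Xsq, f x ≤ fsup)
    (hfd : ∀ x ∈ Xsq, DifferentiableAt ℝ f x)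
    (hf1 : ∀ x ∈ Xsq, |fderiv ℝ f x (1, 0)| ≤ f1sup)
    (hf2 : ∀ x ∈ Xsq, |fderiv ℝ f x (0, 1)| ≤ f2sup)
    (v : ℕ → ℝ) (hv0 : v 0 = 0) :
    (∀ i ≤ N, 0 < μ (region N y F v i) →
      (closure (region N y F v i) ∩ botRight).Nonempty) ∧
    (∀ i j : ℕ, i < j → j ≤ N →
      0 < μ (region N y F v i) → 0 < μ (region N y F v j) →
      (∀ p : ℕ, i < p → p < j → μ (region N y F v p) = 0) →
      (closure (region N y F v j) ∩ closure (region N y F v i) ∩ botRight).Nonempty) :=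
  regions_meet_bottom_right_boundary_general ty α F N y f μ hα hFmono hFconv hy0 hyinc hyN hμ hfl v
end
end

section
/- Assume hypotheses (H1), (H2) and (H3) and additionally c(z_1) > F(y_1). Let v be an optimal price schedule for the semi-discrete monopolist's problem with data (μ, Y_N, c). Then for each i such that μ(X_i) > 0 and μ(X_{i+1}) > 0, the intersection of the closure of the indifference segment cl(X_i) ∩ cl(X_{i+1}) with ({0}×[0,1]) ∪ ([0,1]×{1}) is contained in [0,1]×{1}; that is, the indifference segments meet the upper-left part of the boundary of X only along the top edge [0,1]×{1}. -/
open MeasureTheory Set Filter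
open scoped ENNReal

noncomputable section

/-!
On the left edge `x₁ = 0` a consumer in the closure of `X_{i+1}` weakly prefers good `i + 1` to
the outside option `0`, so `v_{i+1} ≤ x₂ F(y_{i+1}) ≤ F(y_{i+1})`. On the other hand, (H1) with
`k = 0` says that the ratio `c(z_j) / F(y_j)` stays below the next slope of `c` against `F`, so
`c(z_1) > F(y_1)` propagates to `c(z_j) > F(y_j)` for every `j ≥ 1`; and optimality forces every
good bought by a set of positive measure to be priced at least at its cost, since otherwise
pricing all loss-making goods out of the market raises the profit. Hence
`v_{i+1} ≥ c(z_{i+1}) > F(y_{i+1})`, a contradiction.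
-/

lemma lt_of_ratio_lt_slope {a b : ℕ → ℝ} {n : ℕ} (hb : StrictMonoOn b (Iic n)) (hb0 : b 0 = 0)
    (hslope : ∀ j, 1 ≤ j → j < n → a j / b j < (a (j + 1) - a j) / (b (j + 1) - b j))
    (h1 : b 1 < a 1) : ∀ j, 1 ≤ j → j ≤ n → b j < a j := by
  intro j hj
  induction j, hj using Nat.le_induction with
  | base => exact fun _ => h1
  | succ j hj ih =>
    intro hjn
    have hbj : 0 < b j := hb0 ▸ hb (by simp) (by simp; omega) (by omega)
    have hstep : b j < b (j + 1) := hb (by simp; omega) (by simpa using hjn) (by omega)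
    have hratio : 1 < a j / b j := (one_lt_div hbj).2 (ih (by omega))
    have hgain : b (j + 1) - b j < a (j + 1) - a j :=
      (one_lt_div (sub_pos.2 hstep)).1 (hratio.trans (hslope j hj (by omega)))
    linarith [ih (by omega)]

lemma strictMonoOn_comp_grid {ty : ℝ} {N : ℕ} {y : ℕ → ℝ} {F : ℝ → ℝ}
    (hFmono : StrictMonoOn F (Icc 0 ty)) (hy0 : y 0 = 0) (hyinc : ∀ i < N, y i < y (i + 1))
    (hyN : y N ≤ ty) : StrictMonoOn (fun j => F (y j)) (Iic N) := by
  have hy : StrictMonoOn y (Iic N) := strictMonoOn_Iic_of_lt_succ hyinc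
  refine hFmono.comp hy fun j hj => ⟨?_, ?_⟩
  · exact hy0 ▸ hy.monotoneOn (by simp) hj (Nat.zero_le j)
  · exact (hy.monotoneOn hj (by simp) hj).trans hyN

lemma dot_le_abs_add_abs {x : ℝ × ℝ} (hx : x ∈ Xsq) (z : ℝ × ℝ) : dot x z ≤ |z.1| + |z.2| := by
  obtain ⟨⟨hx1, hx1'⟩, ⟨hx2, hx2'⟩⟩ := hx
  have h1 : x.1 * z.1 ≤ |z.1| := by
    nlinarith [le_abs_self z.1, neg_abs_le z.1, abs_nonneg z.1]
  have h2 : x.2 * z.2 ≤ |z.2| := by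
    nlinarith [le_abs_self z.2, neg_abs_le z.2, abs_nonneg z.2]
  exact add_le_add h1 h2

section PricingOut

variable {N : ℕ} {y : ℕ → ℝ} {F : ℝ → ℝ} {c : ℝ × ℝ → ℝ} {v : ℕ → ℝ} {k : ℕ}

lemma region_subset_region_of_le {v' : ℕ → ℝ} (hle : ∀ j, v j ≤ v' j) (hk : v' k = v k) :
    region N y F v k ⊆ region N y F v' k := fun x hx =>
  ⟨hx.1, fun j hj hjk => by linarith [hx.2 j hj hjk, hle j]⟩

/-- The new price of a loss-making good exceeds its old price and, by `dot_le_abs_add_abs`,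
every consumer's valuation of it. -/
def priceOutLosses (y : ℕ → ℝ) (F : ℝ → ℝ) (c : ℝ × ℝ → ℝ) (v : ℕ → ℝ) (k : ℕ) : ℝ :=
  if k ≠ 0 ∧ v k < c (zpt y F k) then |y k| + |F (y k)| + |v k| + 1 else v k

lemma le_priceOutLosses : v k ≤ priceOutLosses y F c v k := by
  unfold priceOutLosses
  split_ifs
  · linarith [le_abs_self (v k), abs_nonneg (y k), abs_nonneg (F (y k))]
  · exact le_rfl

lemma priceOutLosses_zero : priceOutLosses y F c v 0 = v 0 := by
  simp [priceOutLosses]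

lemma region_subset_region_priceOutLosses (hk : ¬(k ≠ 0 ∧ v k < c (zpt y F k))) :
    region N y F v k ⊆ region N y F (priceOutLosses y F c v) k :=
  region_subset_region_of_le (fun _ => le_priceOutLosses) (if_neg hk)

lemma region_priceOutLosses_eq_empty (hz0 : zpt y F 0 = 0) (hv0 : v 0 = 0)
    (hk : k ≠ 0 ∧ v k < c (zpt y F k)) : region N y F (priceOutLosses y F c v) k = ∅ := by
  refine eq_empty_iff_forall_notMem.2 fun x hx => ?_
  have hpref := hx.2 0 (Nat.zero_le N) hk.1.symm
  rw [priceOutLosses_zero, hv0, hz0, priceOutLosses, if_pos hk] at hpref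
  have hbound := dot_le_abs_add_abs hx.1 (zpt y F k)
  simp only [dot, zpt, Prod.fst_zero, Prod.snd_zero, mul_zero, add_zero, sub_zero]
    at hpref hbound
  linarith [abs_nonneg (v k)]

lemma profit_lt_profit_priceOutLosses {μ : Measure (ℝ × ℝ)} [IsFiniteMeasure μ]
    (hz0 : zpt y F 0 = 0) (hc0 : c 0 = 0) (hv0 : v 0 = 0) {j : ℕ} (hj0 : j ≠ 0) (hjN : j ≤ N)
    (hloss : v j < c (zpt y F j)) (hμj : 0 < μ (region N y F v j)) :
    profit μ N y F c v < profit μ N y F c (priceOutLosses y F c v) := by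
  refine Finset.sum_lt_sum (fun k _ => ?_) ⟨j, Finset.mem_range.2 (by omega), ?_⟩
  · by_cases hk : k ≠ 0 ∧ v k < c (zpt y F k)
    · rw [region_priceOutLosses_eq_empty hz0 hv0 hk, measure_empty, ENNReal.toReal_zero,
        mul_zero]
      exact mul_nonpos_of_nonpos_of_nonneg (by linarith [hk.2]) ENNReal.toReal_nonneg
    · have hmargin : 0 ≤ v k - c (zpt y F k) := by
        rcases not_and_or.1 hk with hk0 | hgain
        · rw [not_not.1 hk0, hv0, hz0, hc0, sub_zero]
        · linarith [not_lt.1 hgain]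
      rw [priceOutLosses, if_neg hk]
      have hsub := region_subset_region_priceOutLosses (N := N) hk
      exact mul_le_mul_of_nonneg_left
        (ENNReal.toReal_mono (measure_ne_top _ _) (measure_mono hsub)) hmargin
  · rw [region_priceOutLosses_eq_empty hz0 hv0 ⟨hj0, hloss⟩, measure_empty,
      ENNReal.toReal_zero, mul_zero]
    exact mul_neg_of_neg_of_pos (by linarith) (ENNReal.toReal_pos hμj.ne' (measure_ne_top _ _))

lemma IsOptimal.cost_le_price {μ : Measure (ℝ × ℝ)} [IsFiniteMeasure μ]
    (hopt : IsOptimal μ N y F c v) (hz0 : zpt y F 0 = 0) (hc0 : c 0 = 0) {j : ℕ} (hj0 : j ≠ 0)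
    (hjN : j ≤ N) (hμj : 0 < μ (region N y F v j)) : c (zpt y F j) ≤ v j := by
  by_contra! hloss
  exact (hopt.2 _ (by rw [priceOutLosses_zero, hopt.1])).not_gt
    (profit_lt_profit_priceOutLosses hz0 hc0 hopt.1 hj0 hjN hloss hμj)

end PricingOut

lemma closure_region_subset_price_le {N : ℕ} {y : ℕ → ℝ} {F : ℝ → ℝ} {v : ℕ → ℝ} {j : ℕ}
    (hz0 : zpt y F 0 = 0) (hv0 : v 0 = 0) (hj : j ≠ 0) :
    closure (region N y F v j) ⊆ {x | v j ≤ dot x (zpt y F j)} := by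
  refine closure_minimal (fun x hx => ?_) (isClosed_le continuous_const (by unfold dot; fun_prop))
  have hpref := hx.2 0 (Nat.zero_le N) hj.symm
  rw [hz0, hv0] at hpref
  simp only [mem_ofPred_eq, dot, Prod.fst_zero, Prod.snd_zero, mul_zero, add_zero, sub_zero]
    at hpref ⊢
  linarith

theorem indifference_segments_meet_top_edge_general
    (ty : ℝ) (F : ℝ → ℝ) (c : ℝ × ℝ → ℝ)
    (N : ℕ) (y : ℕ → ℝ) (μ : Measure (ℝ × ℝ))
    (hF0 : F 0 = 0) (hFmono : StrictMonoOn F (Icc 0 ty))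
    (hy0 : y 0 = 0) (hyinc : ∀ i < N, y i < y (i+1)) (hyN : y N ≤ ty)
    (hc0 : c (0, 0) = 0)
    (hprob : IsProbabilityMeasure μ)
    (hH1 : H1 N y F c)
    (hc1 : F (y 1) < c (zpt y F 1))
    (v : ℕ → ℝ) (hopt : IsOptimal μ N y F c v) :
    ∀ i : ℕ, i + 1 ≤ N → 0 < μ (region N y F v i) → 0 < μ (region N y F v (i+1)) →
      (closure (region N y F v i) ∩ closure (region N y F v (i+1))) ∩
          ((({0} : Set ℝ) ×ˢ Icc (0:ℝ) 1) ∪ (Icc (0:ℝ) 1 ×ˢ ({1} : Set ℝ)))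
        ⊆ Icc (0:ℝ) 1 ×ˢ ({1} : Set ℝ) := by
  have := hprob
  rintro i hiN - hμi1 x ⟨⟨-, hxcl⟩, ⟨hx1, hx2⟩ | htop⟩
  · have hz0 : zpt y F 0 = 0 := by simp [zpt, hy0, hF0]
    have hcz0 : c 0 = 0 := hc0
    have hFy := strictMonoOn_comp_grid hFmono hy0 hyinc hyN
    have hFy0 : F (y 0) = 0 := by rw [hy0, hF0]
    have hFpos : 0 < F (y (i + 1)) := hFy0 ▸ hFy (by simp) (by simpa using hiN) (by omega)
    have hcF : F (y (i + 1)) < c (zpt y F (i + 1)) := by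
      refine lt_of_ratio_lt_slope (a := fun j => c (zpt y F j)) hFy hFy0 (fun j hj hjN => ?_)
        hc1 (i + 1) (by omega) hiN
      simpa [hz0, hFy0, hcz0] using hH1 0 j (j + 1) hj (lt_add_one j) hjN
    have hprice := hopt.cost_le_price hz0 hcz0 (by omega) hiN hμi1
    have hxdot := closure_region_subset_price_le hz0 hopt.1 (by omega) hxcl
    simp only [mem_singleton_iff] at hx1
    simp only [mem_ofPred_eq, dot, zpt, hx1, zero_mul, zero_add] at hxdot
    linarith [mul_le_of_le_one_left hFpos.le hx2.2]
  · exact htop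

/-- Lemma `upper_segment`: for an optimal price schedule, the closure of each
indifference segment meets the upper-left part `({0}×[0,1]) ∪ ([0,1]×{1})` of the boundary
only along the top edge `[0,1]×{1}`. -/
theorem indifference_segments_meet_top_edge
    (ty α fsup f1sup f2sup : ℝ) (F : ℝ → ℝ) (c : ℝ × ℝ → ℝ)
    (N : ℕ) (y : ℕ → ℝ) (f : ℝ × ℝ → ℝ) (μ : Measure (ℝ × ℝ))
    (hty : 0 < ty) (hα : 0 < α)
    (hF0 : F 0 = 0) (hFmono : StrictMonoOn F (Icc 0 ty)) (hFconv : ConvexOn ℝ (Icc 0 ty) F)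
    (hy0 : y 0 = 0) (hyinc : ∀ i < N, y i < y (i+1)) (hyN : y N ≤ ty)
    (hc0 : c (0, 0) = 0)
    (hcmono : StrictMonoOn (fun s => c (s, F s)) (Icc 0 ty))
    (hcconv : ConvexOn ℝ (Icc 0 ty) (fun s => c (s, F s)))
    (hμ : μ = (volume.restrict Xsq).withDensity fun x => ENNReal.ofReal (f x))
    (hprob : IsProbabilityMeasure μ)
    (hfl : ∀ x ∈ Xsq, α ≤ f x) (hfu : ∀ x ∈ Xsq, f x ≤ fsup)
    (hfd : ∀ x ∈ Xsq, DifferentiableAt ℝ f x)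
    (hf1 : ∀ x ∈ Xsq, |fderiv ℝ f x (1, 0)| ≤ f1sup)
    (hf2 : ∀ x ∈ Xsq, |fderiv ℝ f x (0, 1)| ≤ f2sup)
    (hH1 : H1 N y F c) (hH2 : H2 N y F c α fsup f1sup) (hH3 : H3 N y F c α fsup f2sup)
    (hc1 : F (y 1) < c (zpt y F 1))
    (v : ℕ → ℝ) (hopt : IsOptimal μ N y F c v) :
    ∀ i : ℕ, i + 1 ≤ N → 0 < μ (region N y F v i) → 0 < μ (region N y F v (i+1)) →
      (closure (region N y F v i) ∩ closure (region N y F v (i+1))) ∩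
          ((({0} : Set ℝ) ×ˢ Icc (0:ℝ) 1) ∪ (Icc (0:ℝ) 1 ×ˢ ({1} : Set ℝ)))
        ⊆ Icc (0:ℝ) 1 ×ˢ ({1} : Set ℝ) :=
  indifference_segments_meet_top_edge_general ty F c N y μ hF0 hFmono hy0 hyinc hyN hc0 hprob hH1
    hc1 v hopt
end
end

section
/- Let F(y) = A y² with 0 < A < 1/3, let c(z) = |z|²/2, let f ≡ 1 (so α = ‖f‖_∞ = 1 and ‖f_{x₁}‖_∞ = ‖f_{x₂}‖_∞ = 0), let N > 3, and let 0 = y_0 < y_1 < ⋯ < y_N be points such that the successive points z_i = (y_i, F(y_i)) on the curve are equally spaced with |z_{i+1} − z_i| = 1/N for each i. Then hypotheses (H1), (H2) and (H3) are satisfied. -/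
open MeasureTheory Set Filter
open scoped ENNReal

noncomputable section

/-!
Along `F(y) = A y²` every difference quotient in (H1)–(H3) is explicit:
`ΔF/Δy = A (u + v)`, `Δc/Δy = (u + v)(1 + A²(u² + v²))/2` and
`Δc/ΔF = (1 + A²(u² + v²))/(2A)` on a step from `u` to `v`. So (H1) is the monotonicity of
`y ↦ y²`, and the quotient in (H2) is at least `1/(2A) > 3/2`. In (H3) the bracketed factor is
at least `1`, and for consecutive points `a < b < d` what remains is
`A (b + d)(2a + 3b + d) < 2 (a + b)`, which follows from `A < 1/3` once
`(b + d)(2a + 3b + d) < 6 (a + b)`. This last inequality is where the equal spacing enters: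
since `A (u + v) < 2/3`, each step `Δy` lies between `4/(5N)` and `1/N`, so `y_N < 1`, and the
inequality is checked separately for `b ≤ 1/N`, for `b + 1/N ≤ 1`, and for `b` within `1/N`
of `1`.
-/

section ThreePointBound

variable {a b d t : ℝ}

lemma three_point_bound_of_le (ha : 0 ≤ a) (hab : a < b) (hbd : b < d) (hdb : d - b < t)
    (hb : 4 * t < 5 * b) (hbt : b ≤ t) (ht : t ≤ 1 / 4) :
    (b + d) * (2 * a + 3 * b + d) < 6 * (a + b) := by
  nlinarith [mul_nonneg (sub_nonneg.2 hbt) (by linarith : (0:ℝ) ≤ 5 * b - 4 * t),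
    mul_nonneg ha (by linarith : (0:ℝ) ≤ 3 - b - d),
    mul_pos (by linarith : (0:ℝ) < b + t - d) (by linarith : (0:ℝ) < 2 * a + 4 * b + d + t)]

lemma three_point_bound_of_add_le (hba : b - a < t) (hbd : b < d) (hdb : d - b < t)
    (htb : t < b) (hb1 : b + t ≤ 1) (ht : t ≤ 1 / 4) :
    (b + d) * (2 * a + 3 * b + d) < 6 * (a + b) := by
  nlinarith [mul_nonneg (by linarith : (0:ℝ) ≤ b - t) (by linarith : (0:ℝ) ≤ 1 - t - b),
    mul_nonneg (by linarith : (0:ℝ) ≤ a - b + t) (by linarith : (0:ℝ) ≤ 3 - b - d),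
    mul_nonneg (by linarith : (0:ℝ) ≤ b + t - d) (by linarith : (0:ℝ) ≤ 4 * b + d),
    mul_nonneg (by linarith : (0:ℝ) ≤ t) (by linarith : (0:ℝ) ≤ 1 / 4 - t)]

lemma three_point_bound_of_lt_add (hba : b - a < t) (hbd : b < d) (hd : d < 1)
    (hb1 : 1 < b + t) (hb : 5 * b + 4 * t < 5) (ht : t ≤ 1 / 4) :
    (b + d) * (2 * a + 3 * b + d) < 6 * (a + b) := by
  nlinarith [
    mul_nonneg (by linarith : (0:ℝ) ≤ b + t - 1) (by linarith : (0:ℝ) ≤ 5 - 5 * b - 4 * t),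
    mul_nonneg (by linarith : (0:ℝ) ≤ a - b + t) (by linarith : (0:ℝ) ≤ 3 - b - d),
    mul_nonneg (by linarith : (0:ℝ) ≤ 1 - d) (by linarith : (0:ℝ) ≤ 2 * a + 4 * b + 1 + d),
    mul_nonneg (by linarith : (0:ℝ) ≤ t) (by linarith : (0:ℝ) ≤ 1 / 4 - t)]

lemma three_point_bound (ha : 0 ≤ a) (hab : a < b) (hbd : b < d) (hba : b - a < t)
    (hdb : d - b < t) (hb : 4 * t < 5 * b) (hb1 : 5 * b + 4 * t < 5) (hd : d < 1)
    (ht : t ≤ 1 / 4) :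
    (b + d) * (2 * a + 3 * b + d) < 6 * (a + b) := by
  rcases le_or_gt b t with hbt | htb
  · exact three_point_bound_of_le ha hab hbd hdb hb hbt ht
  rcases le_or_gt (b + t) 1 with hbt1 | hbt1
  · exact three_point_bound_of_add_le hba hbd hdb htb hbt1 ht
  · exact three_point_bound_of_lt_add hba hbd hd hbt1 hb1 ht

end ThreePointBound

section QuadraticCurve

variable {A u v : ℝ}

lemma quad_diff_pos (hA : 0 < A) (hu : 0 ≤ u) (huv : u < v) : 0 < A * v ^ 2 - A * u ^ 2 := by
  nlinarith [mul_pos hA (mul_pos (sub_pos.2 huv) (by linarith : 0 < u + v))]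

lemma quad_slope (huv : u ≠ v) : (A * v ^ 2 - A * u ^ 2) / (v - u) = A * (u + v) := by
  rw [div_eq_iff (sub_ne_zero.2 huv.symm)]
  ring

lemma cost_slope (huv : u ≠ v) :
    ((v ^ 2 + (A * v ^ 2) ^ 2) / 2 - (u ^ 2 + (A * u ^ 2) ^ 2) / 2) / (v - u)
      = (u + v) * (1 + A ^ 2 * (u ^ 2 + v ^ 2)) / 2 := by
  rw [div_eq_iff (sub_ne_zero.2 huv.symm)]
  ring

lemma cost_div_quad_diff (h : A * v ^ 2 - A * u ^ 2 ≠ 0) :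
    ((v ^ 2 + (A * v ^ 2) ^ 2) / 2 - (u ^ 2 + (A * u ^ 2) ^ 2) / 2) / (A * v ^ 2 - A * u ^ 2)
      = (1 + A ^ 2 * (u ^ 2 + v ^ 2)) / (2 * A) := by
  have hA : A ≠ 0 := by rintro rfl; simp at h
  rw [div_eq_div_iff h (mul_ne_zero two_ne_zero hA)]
  ring

lemma sub_div_quad_diff (huv : u ≠ v) :
    (v - u) / (A * v ^ 2 - A * u ^ 2) = 1 / (A * (u + v)) := by
  rw [← quad_slope huv, one_div_div]

end QuadraticCurve

section Slopes

variable {A a b d : ℝ}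

lemma cost_slope_diff_div_ge (hA : 0 < A) (ha : 0 ≤ a) (hab : a < b) (hbd : b < d) :
    1 / (2 * A) ≤ ((b + d) * (1 + A ^ 2 * (b ^ 2 + d ^ 2)) / 2
      - (a + b) * (1 + A ^ 2 * (a ^ 2 + b ^ 2)) / 2) / (A * (b + d) - A * (a + b)) := by
  have hden : 0 < A * (b + d) - A * (a + b) := by nlinarith
  have hcubic : (a + b) * (a ^ 2 + b ^ 2) ≤ (b + d) * (b ^ 2 + d ^ 2) := by
    gcongr <;> linarith
  rw [le_div_iff₀ hden]
  field_simp
  nlinarith [mul_le_mul_of_nonneg_left hcubic (sq_nonneg A)]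

lemma quad_slope_lt_of_three_point_bound (hA : 0 < A) (hA3 : A < 1 / 3) (ha : 0 ≤ a)
    (hab : a < b) (hbd : b < d) (hP : (b + d) * (2 * a + 3 * b + d) < 6 * (a + b)) :
    A * (b + d) < 2 / (2 + A * (b + d) / (A * (a + b))) *
      (1 + ((1 + A ^ 2 * (b ^ 2 + d ^ 2)) / (2 * A) - (1 + A ^ 2 * (a ^ 2 + b ^ 2)) / (2 * A)) /
        (1 / (A * (a + b)) - 1 / (A * (b + d)))) := by
  have hab0 : 0 < a + b := by linarith
  have hgap : 0 ≤ ((1 + A ^ 2 * (b ^ 2 + d ^ 2)) / (2 * A)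
      - (1 + A ^ 2 * (a ^ 2 + b ^ 2)) / (2 * A)) / (1 / (A * (a + b)) - 1 / (A * (b + d))) := by
    refine div_nonneg (sub_nonneg.2 ?_) (sub_nonneg.2 ?_)
    · gcongr
      linarith
    · gcongr
  have hratio : 2 + A * (b + d) / (A * (a + b)) = (2 * a + 3 * b + d) / (a + b) := by
    field_simp
    ring
  have hpos : 0 < 2 + A * (b + d) / (A * (a + b)) := by
    rw [hratio]
    exact div_pos (by linarith) hab0
  have hmain : A * (b + d) * (2 + A * (b + d) / (A * (a + b))) < 2 := by
    rw [hratio, mul_assoc, ← mul_div_assoc, mul_div_assoc', div_lt_iff₀ hab0]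
    nlinarith [mul_pos hA (by nlinarith : 0 < (b + d) * (2 * a + 3 * b + d))]
  calc A * (b + d) < 2 / (2 + A * (b + d) / (A * (a + b))) := by
        rwa [lt_div_iff₀ hpos]
    _ ≤ _ := le_mul_of_one_le_right (div_pos two_pos hpos).le (by linarith)

end Slopes

section Grid

variable {A u v t : ℝ} {N : ℕ} {y : ℕ → ℝ}

lemma step_lt_of_chord (hA : 0 < A) (hu : 0 ≤ u) (huv : u < v) (ht : 0 < t)
    (hchord : (v - u) ^ 2 + (A * v ^ 2 - A * u ^ 2) ^ 2 = t ^ 2) : v - u < t := by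
  nlinarith [quad_diff_pos hA hu huv]

lemma four_mul_lt_five_mul_step_of_chord (hA : 0 < A) (hA3 : A < 1 / 3) (hu : 0 ≤ u)
    (huv : u < v) (hv : v < 1)
    (hchord : (v - u) ^ 2 + (A * v ^ 2 - A * u ^ 2) ^ 2 = t ^ 2) : 4 * t < 5 * (v - u) := by
  have hs : 0 < v - u := sub_pos.2 huv
  have hslope0 : 0 < A * (u + v) := mul_pos hA (by linarith)
  have hslope : A * (u + v) < 2 / 3 := by nlinarith
  have ht : 9 * t ^ 2 < 13 * (v - u) ^ 2 := by
    have hF : A * v ^ 2 - A * u ^ 2 = A * (u + v) * (v - u) := by ring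
    rw [← hchord, hF, mul_pow]
    nlinarith [mul_pos (by nlinarith : 0 < (2 / 3) ^ 2 - (A * (u + v)) ^ 2) (pow_pos hs 2)]
  nlinarith

lemma sub_lt_mul_of_forall_sub_lt {n : ℕ} (hn : 0 < n) (h : ∀ i < n, y (i + 1) - y i < t) :
    y n - y 0 < n * t := by
  rw [← Finset.sum_range_sub]
  calc ∑ i ∈ Finset.range n, (y (i + 1) - y i) < ∑ _i ∈ Finset.range n, t :=
        Finset.sum_lt_sum_of_nonempty (Finset.nonempty_range_iff.2 hn.ne')
          fun i hi => h i (Finset.mem_range.1 hi)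
    _ = n * t := by simp

lemma grid_nonneg (hmono : StrictMonoOn y (Iic N)) (h0 : 0 ≤ y 0) {i : ℕ} (hi : i ≤ N) :
    0 ≤ y i :=
  h0.trans (hmono.monotoneOn (mem_Iic.2 N.zero_le) (mem_Iic.2 hi) i.zero_le)

lemma grid_three_point_bound (hA : 0 < A) (hA3 : A < 1 / 3) (hN : 4 ≤ N) (ht : 0 < t)
    (hNt : N * t ≤ 1) (hy0 : y 0 = 0) (hmono : StrictMonoOn y (Iic N))
    (hchord : ∀ i < N, (y (i + 1) - y i) ^ 2 + (A * y (i + 1) ^ 2 - A * y i ^ 2) ^ 2 = t ^ 2)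
    {j : ℕ} (hj : j + 1 < N) :
    (y (j + 1) + y (j + 1 + 1)) * (2 * y j + 3 * y (j + 1) + y (j + 1 + 1))
      < 6 * (y j + y (j + 1)) := by
  have hlt : ∀ {i k}, i < k → k ≤ N → y i < y k := fun hik hk =>
    hmono (mem_Iic.2 (hik.le.trans hk)) (mem_Iic.2 hk) hik
  have hle : ∀ {i k}, i ≤ k → k ≤ N → y i ≤ y k := fun hik hk =>
    hmono.monotoneOn (mem_Iic.2 (hik.trans hk)) (mem_Iic.2 hk) hik
  have hnn : ∀ {i}, i ≤ N → 0 ≤ y i := grid_nonneg hmono hy0.ge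
  have hstep : ∀ i < N, y (i + 1) - y i < t := fun i hi =>
    step_lt_of_chord hA (hnn hi.le) (hlt i.lt_succ_self hi) ht (hchord i hi)
  have hyN : y N < 1 := by
    linarith [sub_lt_mul_of_forall_sub_lt (by omega) hstep]
  have hlt1 : ∀ {i}, i ≤ N → y i < 1 := fun hi => (hle hi le_rfl).trans_lt hyN
  have hlow : ∀ i < N, 4 * t < 5 * (y (i + 1) - y i) := fun i hi =>
    four_mul_lt_five_mul_step_of_chord hA hA3 (hnn hi.le) (hlt i.lt_succ_self hi) (hlt1 hi)
      (hchord i hi)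
  have hfirst : 4 * t < 5 * y (j + 1) := by
    linarith [hlow 0 (by omega), hle (show 1 ≤ j + 1 by omega) hj.le]
  have hlast : 5 * y (j + 1) + 4 * t < 5 := by
    have h1 := hlow (N - 1) (by omega)
    rw [Nat.sub_add_cancel (by omega)] at h1
    linarith [hle (show j + 1 ≤ N - 1 by omega) (N.sub_le 1)]
  have ht4 : t ≤ 1 / 4 := by
    have : (4 : ℝ) ≤ N := by exact_mod_cast hN
    nlinarith
  exact three_point_bound (hnn (by omega)) (hlt j.lt_succ_self (by omega))
    (hlt (j + 1).lt_succ_self hj) (hstep j (by omega)) (hstep (j + 1) hj) hfirst hlast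
    (hlt1 hj) ht4

end Grid

section Hypotheses

variable {A : ℝ} {N : ℕ} {y : ℕ → ℝ}

lemma H1_quadratic (hA : 0 < A) (hmono : StrictMonoOn y (Iic N)) (h0 : 0 ≤ y 0) :
    H1 N y (fun s => A * s ^ 2) (fun z => (z.1 ^ 2 + z.2 ^ 2) / 2) := by
  intro k i j hki hij hjN
  have hki' : y k < y i := hmono (mem_Iic.2 (by omega)) (mem_Iic.2 (by omega)) hki
  have hij' : y i < y j := hmono (mem_Iic.2 (by omega)) (mem_Iic.2 hjN) hij
  have hk : 0 ≤ y k := grid_nonneg hmono h0 (by omega)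
  simp only [zpt]
  rw [cost_div_quad_diff (quad_diff_pos hA hk hki').ne',
    cost_div_quad_diff (quad_diff_pos hA (hk.trans hki'.le) hij').ne',
    div_lt_div_iff_of_pos_right (by positivity)]
  nlinarith [mul_pos (pow_pos hA 2) (by nlinarith : 0 < y j ^ 2 - y k ^ 2)]

lemma H2_quadratic (hA : 0 < A) (hA3 : A < 1 / 3) (hmono : StrictMonoOn y (Iic N))
    (h0 : 0 ≤ y 0) : H2 N y (fun s => A * s ^ 2) (fun z => (z.1 ^ 2 + z.2 ^ 2) / 2) 1 1 0 := by
  intro i hi0 hiN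
  obtain ⟨j, rfl⟩ : ∃ j, i = j + 1 := ⟨i - 1, by omega⟩
  have hab : y j < y (j + 1) := hmono (mem_Iic.2 (by omega)) (mem_Iic.2 (by omega)) j.lt_succ_self
  have hbd : y (j + 1) < y (j + 1 + 1) := hmono (mem_Iic.2 (by omega)) (mem_Iic.2 hiN) (by omega)
  simp only [zpt, Nat.add_sub_cancel]
  rw [cost_slope hab.ne, cost_slope hbd.ne, quad_slope hab.ne, quad_slope hbd.ne]
  calc ((3 / 2) * 1 + (0 / 2) * _) / 1 = (3 / 2 : ℝ) := by ring
    _ < 1 / (2 * A) := by rw [lt_div_iff₀ (by positivity)]; linarith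
    _ ≤ _ := cost_slope_diff_div_ge hA (grid_nonneg hmono h0 (by omega)) hab hbd

lemma H3_quadratic (hA : 0 < A) (hA3 : A < 1 / 3) (hmono : StrictMonoOn y (Iic N))
    (h0 : 0 ≤ y 0)
    (hP : ∀ j, j + 1 < N →
      (y (j + 1) + y (j + 1 + 1)) * (2 * y j + 3 * y (j + 1) + y (j + 1 + 1))
        < 6 * (y j + y (j + 1))) :
    H3 N y (fun s => A * s ^ 2) (fun z => (z.1 ^ 2 + z.2 ^ 2) / 2) 1 1 0 := by
  intro i hi0 hiN
  obtain ⟨j, rfl⟩ : ∃ j, i = j + 1 := ⟨i - 1, by omega⟩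
  have hab : y j < y (j + 1) := hmono (mem_Iic.2 (by omega)) (mem_Iic.2 (by omega)) j.lt_succ_self
  have hbd : y (j + 1) < y (j + 1 + 1) := hmono (mem_Iic.2 (by omega)) (mem_Iic.2 hiN) (by omega)
  have ha : 0 ≤ y j := grid_nonneg hmono h0 (by omega)
  simp only [zpt, Nat.add_sub_cancel]
  rw [quad_slope hab.ne, quad_slope hbd.ne,
    cost_div_quad_diff (quad_diff_pos hA ha hab).ne',
    cost_div_quad_diff (quad_diff_pos hA (ha.trans hab.le) hbd).ne',
    sub_div_quad_diff hab.ne, sub_div_quad_diff hbd.ne]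
  simp only [one_mul, zero_mul, add_zero, mul_one]
  exact quad_slope_lt_of_three_point_bound hA hA3 ha hab hbd (hP j hiN)

end Hypotheses

/-- Example: with `F(y) = A y²` for `0 < A < 1/3`, quadratic cost
`c(z) = |z|²/2`, uniform density (`α = ‖f‖_∞ = 1`, `‖f_{x₁}‖_∞ = ‖f_{x₂}‖_∞ = 0`), `N > 3`,
and grid points equally spaced along the curve with `|z_{i+1} − z_i| = 1/N`, hypotheses
(H1)–(H3) hold. -/
theorem example_satisfies_H1_H2_H3
    (A : ℝ) (hA0 : 0 < A) (hA : A < 1/3)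
    (N : ℕ) (hN : 3 < N)
    (y : ℕ → ℝ) (hy0 : y 0 = 0) (hyinc : ∀ i < N, y i < y (i+1))
    (hsp : ∀ i < N,
      Real.sqrt ((y (i+1) - y i)^2 + (A * (y (i+1))^2 - A * (y i)^2)^2) = 1 / N) :
    H1 N y (fun s => A * s^2) (fun z => (z.1^2 + z.2^2) / 2) ∧
    H2 N y (fun s => A * s^2) (fun z => (z.1^2 + z.2^2) / 2) 1 1 0 ∧
    H3 N y (fun s => A * s^2) (fun z => (z.1^2 + z.2^2) / 2) 1 1 0 := by
  have hmono : StrictMonoOn y (Iic N) :=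
    strictMonoOn_Iic_of_lt_succ fun m hm => by simpa using hyinc m hm
  have hchord : ∀ i < N,
      (y (i + 1) - y i) ^ 2 + (A * y (i + 1) ^ 2 - A * y i ^ 2) ^ 2 = (1 / N) ^ 2 :=
    fun i hi => by rw [← hsp i hi, Real.sq_sqrt (by positivity)]
  have hN0 : (0 : ℝ) < N := by exact_mod_cast (by omega : 0 < N)
  refine ⟨H1_quadratic hA0 hmono hy0.ge, H2_quadratic hA0 hA hmono hy0.ge,
    H3_quadratic hA0 hA hmono hy0.ge fun j hj => ?_⟩
  exact grid_three_point_bound hA0 hA hN (by positivity) (mul_one_div_cancel hN0.ne').le hy0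
    hmono hchord hj
end
end
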